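/- arXiv:2307.09214 — 4 statements merged into one kernel-verified Lean document; each statement's English description precedes it below -/
import Mathlib

section
/- Suppose an agent algorithm ALG with 0 bits of memory and sensing range V patrols the d-dimensional grid graph 𝒟 = [n_1] × … × [n_d]. Fix any v_1 ∈ 𝒟, let v_1, v_2, … be the trajectory of ALG started at v_1, and let T be the least index such that {v_1, …, v_T} = 𝒟. Then T = ∏_{i=1}^{d} n_i, the vertices v_1, …, v_T are pairwise distinct, and the closed walk v_1 v_2 … v_T v_1 is a Hamiltonian cycle of 𝒟 (in particular ALG's step at v_T moves the agent to v_1). -/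
open Finset

/-- Manhattan (ℓ¹) norm of an integer vector. -/
def manhattan {d : ℕ} (p : Fin d → ℤ) : ℤ := ∑ i, |p i|

/-- The grid graph vertex set `[n 0] × ⋯ × [n (d-1)]`. -/
def grid {d : ℕ} (n : Fin d → ℕ) : Set (Fin d → ℤ) :=
  {p | ∀ i, 1 ≤ p i ∧ p i ≤ (n i : ℤ)}

/-- Sensing data `S_V(p)`: relative positions of points of `D` within
Manhattan distance `V` of `p`. -/
def sense {d : ℕ} (D : Set (Fin d → ℤ)) (V : ℕ) (p : Fin d → ℤ) : Set (Fin d → ℤ) :=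
  {q | p + q ∈ D ∧ manhattan q ≤ (V : ℤ)}

/-- A deterministic agent algorithm with `b` bits of memory: maps sensing data and a
memory state to a step and a new memory state. -/
structure Agent (d b : ℕ) where
  act : Set (Fin d → ℤ) → (Fin b → Bool) → (Fin d → ℤ) × (Fin b → Bool)

namespace Agent

/-- Validity: at every vertex of `D`, in every memory state, the chosen step is a
unit step leading to a vertex of `D`. -/
def Valid {d b : ℕ} (A : Agent d b) (D : Set (Fin d → ℤ)) (V : ℕ) : Prop :=
  ∀ p ∈ D, ∀ m, manhattan (A.act (sense D V p) m).1 = 1 ∧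
    (A.act (sense D V p) m).1 ∈ sense D V p

/-- The trajectory (position, memory) of the agent after `t` steps, starting from
position `v` and memory state `m`. -/
def traj {d b : ℕ} (A : Agent d b) (D : Set (Fin d → ℤ)) (V : ℕ)
    (v : Fin d → ℤ) (m : Fin b → Bool) : ℕ → (Fin d → ℤ) × (Fin b → Bool)
  | 0 => (v, m)
  | t + 1 =>
      let s := Agent.traj A D V v m t
      (s.1 + (A.act (sense D V s.1) s.2).1, (A.act (sense D V s.1) s.2).2)

/-- The agent patrols `D`: it is valid, and from any initial position in `D` and any
initial memory state, its trajectory visits every vertex of `D` within finitely many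
steps. -/
def Patrols {d b : ℕ} (A : Agent d b) (D : Set (Fin d → ℤ)) (V : ℕ) : Prop :=
  A.Valid D V ∧ ∀ v₁ ∈ D, ∀ m, ∀ v ∈ D, ∃ t, (A.traj D V v₁ m t).1 = v

end Agent

/-- The graph on a set of integer vectors with edges between points at Manhattan
distance 1. -/
def latticeGraph {d : ℕ} (S : Set (Fin d → ℤ)) : SimpleGraph S where
  Adj p q := manhattan (p.1 - q.1) = 1
  symm := by
    constructor
    intro p q h
    simp only [manhattan, Pi.sub_apply] at h ⊢
    simpa [abs_sub_comm] using h
  loopless := by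
    constructor
    intro p h
    simp [manhattan] at h

/-- The `d`-dimensional grid graph `[n 0] × ⋯ × [n (d-1)]`. -/
def gridGraph {d : ℕ} (n : Fin d → ℕ) : SimpleGraph (grid n) :=
  latticeGraph (grid n)

/-!
Without memory the agent's next position depends only on its current one, so its trajectory is
the orbit of a self-map `f` of the grid `𝒟`. Patrolling from `f v₁` returns to `v₁`, so `v₁` is a
periodic point of `f`; as its orbit covers `𝒟`, the orbit is a single cycle through all of `𝒟`,
visited without repetition, and its minimal period is both `|𝒟| = ∏ i, n i` and the covering
time `T`.
-/

open Function

namespace Function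

variable {α : Type*} {f : α → α} {x : α}

theorem mem_periodicPts_of_iterate_apply_eq {t : ℕ} (h : f^[t] (f x) = x) :
    x ∈ periodicPts f :=
  mk_mem_periodicPts t.succ_pos (by rwa [IsPeriodicPt, IsFixedPt, iterate_succ_apply])

theorem range_iterate_eq_of_mapsTo {s : Set α} (hf : Set.MapsTo f s s) (hx : x ∈ s)
    (hcov : ∀ y ∈ s, ∃ t, f^[t] x = y) : Set.range (f^[·] x) = s :=
  (Set.range_subset_iff.2 fun t => hf.iterate t hx).antisymm hcov

theorem range_iterate_eq_image_Iio_minimalPeriod (hx : x ∈ periodicPts f) :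
    Set.range (f^[·] x) = (f^[·] x) '' Set.Iio (minimalPeriod f x) :=
  (Set.range_subset_iff.2 fun t => (Set.mem_image ..).2
    ⟨t % minimalPeriod f x, Nat.mod_lt _ (minimalPeriod_pos_of_mem_periodicPts hx),
      iterate_mod_minimalPeriod_eq⟩).antisymm (Set.image_subset_range _ _)

theorem ncard_range_iterate (hx : x ∈ periodicPts f) :
    (Set.range (f^[·] x)).ncard = minimalPeriod f x := by
  rw [range_iterate_eq_image_Iio_minimalPeriod hx,
    iterate_injOn_Iio_minimalPeriod.ncard_image, Set.ncard_Iio_nat]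

theorem isLeast_minimalPeriod_iterate_covers_range (hx : x ∈ periodicPts f) :
    IsLeast {T | ∀ y ∈ Set.range (f^[·] x), ∃ t < T, f^[t] x = y} (minimalPeriod f x) := by
  refine ⟨?_, fun T hT => ?_⟩
  · rw [range_iterate_eq_image_Iio_minimalPeriod hx]
    rintro _ ⟨t, ht, rfl⟩
    exact ⟨t, ht, rfl⟩
  · by_contra! hlt
    obtain ⟨t, ht, heq⟩ := hT _ ⟨T, rfl⟩
    exact ht.ne (iterate_injOn_Iio_minimalPeriod (ht.trans hlt) hlt heq)

end Function

theorem ncard_grid {d : ℕ} (n : Fin d → ℕ) : (grid n).ncard = ∏ i, n i := by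
  have hgrid : grid n = ↑(Fintype.piFinset fun i => Finset.Icc (1 : ℤ) (n i)) := by
    ext p
    simp only [grid, Set.mem_ofPred_eq, Finset.mem_coe, Fintype.mem_piFinset, Finset.mem_Icc]
  rw [hgrid, Set.ncard_coe_finset, Fintype.card_piFinset]
  exact Finset.prod_congr rfl fun i _ => by simp

namespace Agent

variable {d : ℕ} {D : Set (Fin d → ℤ)} {V : ℕ} {A : Agent d 0}

def move (A : Agent d 0) (D : Set (Fin d → ℤ)) (V : ℕ) (p : Fin d → ℤ) : Fin d → ℤ :=
  p + (A.act (sense D V p) isEmptyElim).1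

theorem traj_fst_eq_iterate_move (v : Fin d → ℤ) (m : Fin 0 → Bool) (t : ℕ) :
    (A.traj D V v m t).1 = (A.move D V)^[t] v := by
  induction t with
  | zero => rfl
  | succ t ih =>
    rw [iterate_succ_apply', ← ih, traj, move, Subsingleton.elim (A.traj D V v m t).2]

theorem Valid.mapsTo_move (hA : A.Valid D V) : Set.MapsTo (A.move D V) D D :=
  fun p hp => (hA p hp _).2.1

theorem Patrols.exists_iterate_move_eq (hA : A.Patrols D V) {v w : Fin d → ℤ} (hv : v ∈ D)
    (hw : w ∈ D) : ∃ t, (A.move D V)^[t] v = w := by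
  obtain ⟨t, ht⟩ := hA.2 v hv isEmptyElim w hw
  exact ⟨t, traj_fst_eq_iterate_move v _ t ▸ ht⟩

end Agent

theorem zero_bit_patrol_induces_hamiltonian_cycle_general {d : ℕ}
    (n : Fin d → ℕ) (V : ℕ)
    (A : Agent d 0) (hA : A.Patrols (grid n) V)
    (v₁ : Fin d → ℤ) (hv₁ : v₁ ∈ grid n) (m : Fin 0 → Bool) (T : ℕ)
    (hT : IsLeast {T' : ℕ | ∀ v ∈ grid n, ∃ t < T', (A.traj (grid n) V v₁ m t).1 = v} T) :
    T = ∏ i, n i ∧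
    (∀ s t, s < T → t < T →
      (A.traj (grid n) V v₁ m s).1 = (A.traj (grid n) V v₁ m t).1 → s = t) ∧
    (A.traj (grid n) V v₁ m T).1 = v₁ := by
  have hrange : Set.range ((A.move (grid n) V)^[·] v₁) = grid n :=
    range_iterate_eq_of_mapsTo hA.1.mapsTo_move hv₁ fun _ hv => hA.exists_iterate_move_eq hv₁ hv
  have hper : v₁ ∈ periodicPts (A.move (grid n) V) := by
    obtain ⟨t, ht⟩ := hA.exists_iterate_move_eq (hA.1.mapsTo_move hv₁) hv₁
    exact mem_periodicPts_of_iterate_apply_eq ht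
  simp only [Agent.traj_fst_eq_iterate_move] at hT ⊢
  have hleast := isLeast_minimalPeriod_iterate_covers_range hper
  rw [hrange] at hleast
  obtain rfl := hT.unique hleast
  exact ⟨by rw [← ncard_grid, ← ncard_range_iterate hper, hrange],
    fun s t hs ht => iterate_injOn_Iio_minimalPeriod hs ht, iterate_minimalPeriod⟩

/-- If a `0`-bit agent algorithm with sensing range `V` patrols the
grid `𝒟 = [n 0] × ⋯ × [n (d-1)]`, `v₁ ∈ 𝒟`, and `T` is the least index such that the
first `T` trajectory points `v₁, …, v_T` (i.e. `traj 0, …, traj (T-1)`) cover `𝒟`,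
then `T = ∏ i, n i`, the vertices `v₁, …, v_T` are pairwise distinct, and the walk
closes up into a Hamiltonian cycle: the step at `v_T` moves the agent back to `v₁`. -/
theorem zero_bit_patrol_induces_hamiltonian_cycle {d : ℕ} (hd : 1 ≤ d)
    (n : Fin d → ℕ) (hn : ∀ i, 2 ≤ n i) (V : ℕ) (hV : 1 ≤ V)
    (A : Agent d 0) (hA : A.Patrols (grid n) V)
    (v₁ : Fin d → ℤ) (hv₁ : v₁ ∈ grid n) (m : Fin 0 → Bool) (T : ℕ)
    (hT : IsLeast {T' : ℕ | ∀ v ∈ grid n, ∃ t < T', (A.traj (grid n) V v₁ m t).1 = v} T) :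
    T = ∏ i, n i ∧
    (∀ s t, s < T → t < T →
      (A.traj (grid n) V v₁ m s).1 = (A.traj (grid n) V v₁ m t).1 → s = t) ∧
    (A.traj (grid n) V v₁ m T).1 = v₁ :=
  zero_bit_patrol_induces_hamiltonian_cycle_general n V A hA v₁ hv₁ m T hT
end

section
/- Let 𝒟 = [n_1] × … × [n_d] be a d-dimensional grid graph (all n_i ≥ 2), let V ≥ 1, and set m_i := min(n_i, 2V + 1). If ∏_{i=1}^{d} m_i is odd, then no agent algorithm with 0 bits of memory and sensing range V patrols 𝒟. -/
open Finset

/-! Grid points with the same sensing data form regions, which are the cells of a smaller grid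
with `∏ i, min (n i) (2V + 1)` cells. A memoryless agent takes the same step everywhere in a
region, so when it leaves a region it enters a neighbouring cell determined by the region alone.
This defines a map on the cells, which is onto because the agent gets from every region to every
other. It swaps the two colours of the chessboard colouring, and a colour-swapping self-surjection
of a finite set forces equally many cells of each colour, so the number of cells is even. -/

theorem Finset.card_filter_le_card_filter_not_of_surjOn {β : Type*} (s : Finset β) {g : β → β}
    {P : β → Prop} [DecidablePred P] (hsurj : Set.SurjOn g s s)
    (hP : ∀ x ∈ s, P (g x) → ¬ P x) :
    #(s.filter P) ≤ #(s.filter fun x ↦ ¬ P x) := by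
  classical
  calc #(s.filter P) ≤ #((s.filter fun x ↦ ¬ P x).image g) := card_le_card fun y hy ↦ ?_
    _ ≤ #(s.filter fun x ↦ ¬ P x) := card_image_le
  obtain ⟨hys, hPy⟩ := mem_filter.mp hy
  obtain ⟨x, hxs, rfl⟩ := hsurj hys
  exact mem_image_of_mem g (mem_filter.mpr ⟨hxs, hP x hxs hPy⟩)

theorem Finset.even_card_of_surjOn_of_swaps {β : Type*} (s : Finset β) {g : β → β}
    {P : β → Prop} [DecidablePred P] (hsurj : Set.SurjOn g s s)
    (hswap : ∀ x ∈ s, P (g x) ↔ ¬ P x) : Even #s := by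
  have h₁ := s.card_filter_le_card_filter_not_of_surjOn hsurj fun x hx ↦ (hswap x hx).1
  have h₂ := s.card_filter_le_card_filter_not_of_surjOn (P := fun x ↦ ¬ P x) hsurj
    fun x hx hgx hx' ↦ hgx ((hswap x hx).2 hx')
  simp only [not_not] at h₂
  rw [← s.card_filter_add_card_filter_not P, le_antisymm h₁ h₂]
  exact ⟨_, rfl⟩

theorem surjOn_image_of_orbits_cover {α β : Type*} {f : α → α} {D : Set α} {r : α → β}
    {g : β → β} (hf : Set.MapsTo f D D) (hr : ∀ p ∈ D, r (f p) = r p ∨ r (f p) = g (r p))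
    (hexit : ∀ p ∈ D, ∃ t, r (f^[t] p) ≠ r p) (hcover : ∀ p ∈ D, ∀ q ∈ D, ∃ t, f^[t] p = q) :
    Set.SurjOn g (r '' D) (r '' D) := by
  -- leave the region of `p` and come back: the region entered from is a preimage
  rintro _ ⟨p, hp, rfl⟩
  obtain ⟨t, ht⟩ := hexit p hp
  have hq : f^[t] p ∈ D := hf.iterate t hp
  obtain ⟨k, hbefore, hafter⟩ := Nat.exists_not_and_succ_of_not_zero_of_exists
    (p := fun k ↦ r (f^[k] (f^[t] p)) = r p) ht (by
      obtain ⟨u, hu⟩ := hcover _ hq p hp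
      exact ⟨u, congrArg r hu⟩)
  rw [Function.iterate_succ_apply'] at hafter
  have hkD : f^[k] (f^[t] p) ∈ D := hf.iterate k hq
  refine ⟨_, ⟨_, hkD, rfl⟩, ?_⟩
  rcases hr _ hkD with h | h
  · exact (hbefore (h.symm.trans hafter)).elim
  · exact h.symm.trans hafter

lemma abs_le_manhattan {d : ℕ} (q : Fin d → ℤ) (i : Fin d) : |q i| ≤ manhattan q :=
  single_le_sum (fun j _ ↦ abs_nonneg (q j)) (mem_univ i)

lemma exists_eq_single_of_manhattan_eq_one {d : ℕ} {s : Fin d → ℤ} (h : manhattan s = 1) :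
    ∃ i e, (e = 1 ∨ e = -1) ∧ s = Pi.single i e := by
  obtain ⟨i, hi⟩ : ∃ i, s i ≠ 0 := by
    by_contra! hs
    simp [manhattan, hs] at h
  have hzero : ∀ j ≠ i, s j = 0 := fun j hj ↦ by
    have := add_le_sum (fun k _ ↦ abs_nonneg (s k)) (mem_univ i) (mem_univ j) hj.symm
    have := abs_pos.mpr hi
    rw [← abs_nonpos_iff]
    unfold manhattan at h
    omega
  refine ⟨i, s i, ?_, funext fun j ↦ ?_⟩
  · have h₁ : |s i| ≤ 1 := h ▸ abs_le_manhattan s i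
    have h₂ := abs_pos.mpr hi
    rcases abs_cases (s i) with ⟨h₃, _⟩ | ⟨h₃, _⟩ <;> omega
  · rcases eq_or_ne j i with rfl | hj
    · simp
    · simp [hzero j hj, hj]

/-- Along an axis, each coordinate within distance `V` of an end of `[1, N]` gets its own index
and the ones in between share one, so the indices are `0, …, min N (2V + 1) - 1` and they
record exactly what the agent senses along that axis. -/
def regionIndex (N V : ℕ) (x : ℤ) : ℤ :=
  min (x - 1) V + max (x - max ((N : ℤ) - V) (V + 1)) 0

lemma regionIndex_add_eq_or (N V : ℕ) (x : ℤ) {e : ℤ} (he : e = 1 ∨ e = -1) :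
    regionIndex N V (x + e) = regionIndex N V x ∨
      regionIndex N V (x + e) = regionIndex N V x + e := by
  unfold regionIndex; omega

lemma min_eq_of_regionIndex_eq {N V : ℕ} {x y : ℤ} (h : regionIndex N V x = regionIndex N V y) :
    min (x - 1) V = min (y - 1) V ∧ min (N - x) V = min (N - y) V := by
  unfold regionIndex at h; omega

lemma regionIndex_mem_Ico {N V : ℕ} {x : ℤ} (h₁ : 1 ≤ x) (h₂ : x ≤ N) :
    regionIndex N V x ∈ Ico 0 (min (N : ℤ) (2 * V + 1)) := by
  rw [mem_Ico]; unfold regionIndex; omega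

lemma exists_regionIndex_eq {N V : ℕ} {c : ℤ} (hc : c ∈ Ico 0 (min (N : ℤ) (2 * V + 1))) :
    ∃ x : ℤ, (1 ≤ x ∧ x ≤ N) ∧ regionIndex N V x = c := by
  rw [mem_Ico] at hc
  by_cases hcV : c ≤ V
  · exact ⟨c + 1, by unfold regionIndex; omega⟩
  · exact ⟨c + max ((N : ℤ) - V) (V + 1) - V, by unfold regionIndex; omega⟩

def region {d : ℕ} (n : Fin d → ℕ) (V : ℕ) (p : Fin d → ℤ) : Fin d → ℤ :=
  fun i ↦ regionIndex (n i) V (p i)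

noncomputable def regionBox {d : ℕ} (n : Fin d → ℕ) (V : ℕ) : Finset (Fin d → ℤ) :=
  Fintype.piFinset fun i ↦ Ico 0 (min (n i : ℤ) (2 * V + 1))

lemma card_regionBox {d : ℕ} (n : Fin d → ℕ) (V : ℕ) :
    #(regionBox n V) = ∏ i, min (n i) (2 * V + 1) := by
  rw [regionBox, Fintype.card_piFinset]
  refine prod_congr rfl fun i _ ↦ ?_
  rw [Int.card_Ico]
  omega

lemma image_region_grid {d : ℕ} (n : Fin d → ℕ) (V : ℕ) :
    region n V '' grid n = regionBox n V := by
  ext R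
  simp only [Set.mem_image, mem_coe, regionBox, Fintype.mem_piFinset]
  constructor
  · rintro ⟨p, hp, rfl⟩ i
    exact regionIndex_mem_Ico (hp i).1 (hp i).2
  · intro hR
    choose x hx hxR using fun i ↦ exists_regionIndex_eq (hR i)
    exact ⟨x, hx, funext hxR⟩

lemma region_add_single_eq_or {d : ℕ} (n : Fin d → ℕ) (V : ℕ) (p : Fin d → ℤ) (i : Fin d)
    {e : ℤ} (he : e = 1 ∨ e = -1) :
    region n V (p + Pi.single i e) = region n V p ∨
      region n V (p + Pi.single i e) = region n V p + Pi.single i e := by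
  refine (regionIndex_add_eq_or (n i) V (p i) he).imp (fun h ↦ ?_) (fun h ↦ ?_) <;>
    funext j <;> by_cases hj : j = i <;> simp [region, h, hj]

lemma sense_eq_of_region_eq {d : ℕ} {n : Fin d → ℕ} {V : ℕ} {p q : Fin d → ℤ}
    (hp : p ∈ grid n) (hq : q ∈ grid n) (h : region n V p = region n V q) :
    sense (grid n) V p = sense (grid n) V q := by
  ext v
  simp only [sense, grid, Set.mem_ofPred_eq, Pi.add_apply]
  refine and_congr_left fun hv ↦ forall_congr' fun i ↦ ?_
  have := abs_le.mp ((abs_le_manhattan v i).trans hv)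
  have := min_eq_of_regionIndex_eq (congrFun h i)
  have := hp i
  have := hq i
  omega

namespace Agent

variable {d : ℕ}

def stepAt (A : Agent d 0) (D : Set (Fin d → ℤ)) (V : ℕ) (p : Fin d → ℤ) : Fin d → ℤ :=
  (A.act (sense D V p) default).1

def next (A : Agent d 0) (D : Set (Fin d → ℤ)) (V : ℕ) (p : Fin d → ℤ) : Fin d → ℤ :=
  p + A.stepAt D V p

lemma traj_fst_eq_iterate (A : Agent d 0) (D : Set (Fin d → ℤ)) (V : ℕ) (v : Fin d → ℤ)
    (m : Fin 0 → Bool) (t : ℕ) : (A.traj D V v m t).1 = (A.next D V)^[t] v := by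
  induction t with
  | zero => rfl
  | succ t ih =>
    rw [Function.iterate_succ_apply', ← ih]
    simp only [traj, next, stepAt, Subsingleton.elim (A.traj D V v m t).2 default]

variable {A : Agent d 0} {D : Set (Fin d → ℤ)} {V : ℕ} {p : Fin d → ℤ}

lemma Valid.manhattan_stepAt (hA : A.Valid D V) (hp : p ∈ D) :
    manhattan (A.stepAt D V p) = 1 :=
  (hA p hp default).1

lemma Valid.mapsTo_next (hA : A.Valid D V) : Set.MapsTo (A.next D V) D D :=
  fun p hp ↦ (hA p hp default).2.1

lemma Patrols.exists_iterate_next_eq (hA : A.Patrols D V) (hp : p ∈ D) {q : Fin d → ℤ}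
    (hq : q ∈ D) : ∃ t, (A.next D V)^[t] p = q := by
  obtain ⟨t, ht⟩ := hA.2 p hp default q hq
  exact ⟨t, by rwa [traj_fst_eq_iterate] at ht⟩

variable {n : Fin d → ℕ}

lemma stepAt_eq_of_region_eq {q : Fin d → ℤ} (hp : p ∈ grid n) (hq : q ∈ grid n)
    (h : region n V p = region n V q) : A.stepAt (grid n) V p = A.stepAt (grid n) V q := by
  rw [stepAt, stepAt, sense_eq_of_region_eq hp hq h]

/-- The cell reached by leaving region `R`, read off at an arbitrary point of `R` (junk when `R`
is not the region of a grid point). -/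
noncomputable def regionStep (A : Agent d 0) (n : Fin d → ℕ) (V : ℕ) (R : Fin d → ℤ) :
    Fin d → ℤ :=
  R + A.stepAt (grid n) V (Function.invFunOn (region n V) (grid n) R)

lemma regionStep_region (hp : p ∈ grid n) :
    A.regionStep n V (region n V p) = region n V p + A.stepAt (grid n) V p := by
  have h : ∃ q ∈ grid n, region n V q = region n V p := ⟨p, hp, rfl⟩
  rw [regionStep, stepAt_eq_of_region_eq (Function.invFunOn_mem h) hp (Function.invFunOn_eq h)]

lemma Valid.region_next_eq_or (hA : A.Valid (grid n) V) (hp : p ∈ grid n) :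
    region n V (A.next (grid n) V p) = region n V p ∨
      region n V (A.next (grid n) V p) = A.regionStep n V (region n V p) := by
  obtain ⟨i, e, he, hs⟩ := exists_eq_single_of_manhattan_eq_one (hA.manhattan_stepAt hp)
  rw [regionStep_region hp, next, hs]
  exact region_add_single_eq_or n V p i he

lemma Valid.even_sum_regionStep_iff (hA : A.Valid (grid n) V) (hp : p ∈ grid n) :
    Even (∑ i, A.regionStep n V (region n V p) i) ↔ ¬ Even (∑ i, region n V p i) := by
  obtain ⟨i, e, he, hs⟩ := exists_eq_single_of_manhattan_eq_one (hA.manhattan_stepAt hp)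
  rw [regionStep_region hp, hs]
  simp only [Pi.add_apply, sum_add_distrib, sum_pi_single', mem_univ, if_true, Int.even_add]
  rcases he with rfl | rfl <;> simp

lemma Valid.exists_iterate_region_ne (hA : A.Valid (grid n) V) (hp : p ∈ grid n) :
    ∃ t, region n V ((A.next (grid n) V)^[t] p) ≠ region n V p := by
  by_contra! hstay
  -- the step would never change, so the agent would walk off the grid along a line
  obtain ⟨i, e, he, hs⟩ := exists_eq_single_of_manhattan_eq_one (hA.manhattan_stepAt hp)
  have hline (t : ℕ) : (A.next (grid n) V)^[t] p = p + (t : ℤ) • Pi.single i e := by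
    induction t with
    | zero => simp
    | succ t ih =>
      rw [Function.iterate_succ_apply', next,
        stepAt_eq_of_region_eq (hA.mapsTo_next.iterate t hp) hp (hstay t), hs, ih]
      push_cast
      rw [add_smul, one_smul, add_assoc]
  have hout := hA.mapsTo_next.iterate (n i) hp i
  rw [hline] at hout
  have := hp i
  simp only [zsmul_eq_mul, Int.cast_natCast, Pi.add_apply, Pi.mul_apply, Pi.natCast_apply,
    Pi.single_eq_same] at hout
  rcases he with rfl | rfl <;> omega

end Agent

theorem no_zero_bit_patrol_of_odd_region_count_general {d : ℕ} (n : Fin d → ℕ) (V : ℕ)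
    (hodd : Odd (∏ i, min (n i) (2 * V + 1))) :
    ¬ ∃ A : Agent d 0, A.Patrols (grid n) V := by
  rintro ⟨A, hA⟩
  have hsurj : Set.SurjOn (A.regionStep n V) (region n V '' grid n) (region n V '' grid n) :=
    surjOn_image_of_orbits_cover hA.1.mapsTo_next (fun _ ↦ hA.1.region_next_eq_or)
      (fun _ ↦ hA.1.exists_iterate_region_ne) fun _ hp _ ↦ hA.exists_iterate_next_eq hp
  have hswap : ∀ R ∈ region n V '' grid n,
      Even (∑ i, A.regionStep n V R i) ↔ ¬ Even (∑ i, R i) := by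
    rintro _ ⟨p, hp, rfl⟩
    exact hA.1.even_sum_regionStep_iff hp
  rw [image_region_grid] at hsurj hswap
  have heven :=
    (regionBox n V).even_card_of_surjOn_of_swaps (P := fun R ↦ Even (∑ i, R i)) hsurj hswap
  rw [card_regionBox] at heven
  exact Nat.not_even_iff_odd.mpr hodd heven

/-- If `∏ i, min (n i) (2V + 1)` is odd then no agent algorithm with
`0` bits of memory and sensing range `V` patrols the grid `[n 0] × ⋯ × [n (d-1)]`. -/
theorem no_zero_bit_patrol_of_odd_region_count {d : ℕ} (hd : 1 ≤ d) (n : Fin d → ℕ)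
    (hn : ∀ i, 2 ≤ n i) (V : ℕ) (hV : 1 ≤ V)
    (hodd : Odd (∏ i, min (n i) (2 * V + 1))) :
    ¬ ∃ A : Agent d 0, A.Patrols (grid n) V :=
  no_zero_bit_patrol_of_odd_region_count_general n V hodd
end

section
/- Let 𝒟 = [n_1] × … × [n_d] be a d-dimensional grid graph with d ≥ 2 (all n_i ≥ 2), and let V ≥ 1 with n_1 > 2V + 1 and n_2 > 2V + 1. Then the four vertices (V+1, V+1, 1, …, 1), (V+1, V+2, 1, …, 1), (V+2, V+1, 1, …, 1) and (V+2, V+2, 1, …, 1) of 𝒟 are pairwise sensing-equivalent, i.e., they all lie in a single sensing region. -/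
/-!
A displacement `q` with `‖q‖₁ ≤ V` moves each coordinate by at most `V`. In the first two
coordinates all four vertices therefore stay inside `[1, 2V + 2] ⊆ [1, n_i]`, so whether `p + q`
lies in the grid is decided by the remaining coordinates, where the four vertices agree.
-/

open Finset

/-- The vertex `(a, b, 1, …, 1)` of a `(d+2)`-dimensional grid. -/
def cornerVtx (d : ℕ) (a b : ℤ) : Fin (d + 2) → ℤ :=
  fun i => if (i : ℕ) = 0 then a else if (i : ℕ) = 1 then b else 1

lemma sense_grid_eq_of_forall_eq_or_far_from_boundary {d : ℕ} {n : Fin d → ℕ} {V : ℕ} {p p' : Fin d → ℤ}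
    (h : ∀ i, p i = p' i ∨
      ((V : ℤ) < p i ∧ p i + V ≤ n i ∧ (V : ℤ) < p' i ∧ p' i + V ≤ n i)) :
    sense (grid n) V p = sense (grid n) V p' := by
  ext q
  simp only [sense, grid, Set.mem_ofPred_eq, Pi.add_apply]
  refine and_congr_left fun hq => forall_congr' fun i => ?_
  have hqi := abs_le.mp ((abs_le_manhattan q i).trans hq)
  rcases h i with heq | ⟨hp, hpn, hp', hpn'⟩
  · rw [heq]
  · constructor <;> intro <;> constructor <;> omega

theorem four_vertices_in_one_sensing_region_general (d : ℕ) (n : Fin (d + 2) → ℕ)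
    (V : ℕ)
    (h0 : 2 * V + 1 < n 0) (h1 : 2 * V + 1 < n 1) :
    ∀ a ∈ ({(V : ℤ) + 1, (V : ℤ) + 2} : Set ℤ),
    ∀ b ∈ ({(V : ℤ) + 1, (V : ℤ) + 2} : Set ℤ),
    ∀ a' ∈ ({(V : ℤ) + 1, (V : ℤ) + 2} : Set ℤ),
    ∀ b' ∈ ({(V : ℤ) + 1, (V : ℤ) + 2} : Set ℤ),
      sense (grid n) V (cornerVtx d a b) = sense (grid n) V (cornerVtx d a' b') := by
  rintro a ha b hb a' ha' b' hb'
  simp only [Set.mem_insert_iff, Set.mem_singleton_iff] at ha hb ha' hb'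
  have hn0 : (2 * V + 2 : ℤ) ≤ n 0 := by exact_mod_cast h0
  have hn1 : (2 * V + 2 : ℤ) ≤ n 1 := by exact_mod_cast h1
  apply sense_grid_eq_of_forall_eq_or_far_from_boundary
  intro i
  cases i using Fin.cases with
  | zero =>
    refine .inr ?_
    simp only [cornerVtx, Fin.coe_ofNat_eq_mod, Nat.zero_mod, ↓reduceIte]
    omega
  | succ i =>
    cases i using Fin.cases with
    | zero =>
      refine .inr ?_
      simp only [cornerVtx, Fin.succ_zero_eq_one, Fin.coe_ofNat_eq_mod, Nat.one_mod, one_ne_zero,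
        ↓reduceIte]
      omega
    | succ i => exact .inl (by simp [cornerVtx])

/-- If `n 0 > 2V + 1` and `n 1 > 2V + 1` (with `d ≥ 2`), then the
four vertices `(V+1, V+1, 1, …, 1)`, `(V+1, V+2, 1, …, 1)`, `(V+2, V+1, 1, …, 1)`,
`(V+2, V+2, 1, …, 1)` are pairwise sensing-equivalent: they all have the same sensing
data, i.e. they lie in a single sensing region. -/
theorem four_vertices_in_one_sensing_region (d : ℕ) (n : Fin (d + 2) → ℕ)
    (hn : ∀ i, 2 ≤ n i) (V : ℕ) (hV : 1 ≤ V)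
    (h0 : 2 * V + 1 < n 0) (h1 : 2 * V + 1 < n 1) :
    ∀ a ∈ ({(V : ℤ) + 1, (V : ℤ) + 2} : Set ℤ),
    ∀ b ∈ ({(V : ℤ) + 1, (V : ℤ) + 2} : Set ℤ),
    ∀ a' ∈ ({(V : ℤ) + 1, (V : ℤ) + 2} : Set ℤ),
    ∀ b' ∈ ({(V : ℤ) + 1, (V : ℤ) + 2} : Set ℤ),
      sense (grid n) V (cornerVtx d a b) = sense (grid n) V (cornerVtx d a' b') :=
  four_vertices_in_one_sensing_region_general d n V h0 h1
end

section
/- Let 𝒟 = [n_1] × … × [n_d] be a d-dimensional grid graph (all n_i ≥ 2) such that at most one index i has n_i > 3 and ∏_{i=1}^{d} min(n_i, 3) is even. Then there exists an agent algorithm with 0 bits of memory and sensing range V = 1 that patrols 𝒟. -/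
/-!
Since `∏ i, min (n i) 3` is even, some side has length 2. The back-and-forth walk along it is
a closed walk of even length; sweeping the remaining coordinates into it one at a time,
boustrophedon style and with the long coordinate (if any) last, multiplies its length by
`n i` each time and yields a Hamiltonian cycle of the grid. A memoryless agent can follow such a
cycle as soon as its step is a function of what it senses. With range 1 it senses, in every
coordinate, whether it stands at `1`, at `n i`, or strictly between: this determines every
coordinate of length at most 3, and positions that differ in the long coordinate lie strictly
inside it, where the last sweep moves in a direction fixed by the other coordinates.
-/

open Finset

open Function

section Sensing

variable {d : ℕ} {n : Fin d → ℕ} {p q : Fin d → ℤ}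

lemma manhattan_single (i : Fin d) (a : ℤ) : manhattan (Pi.single i a) = |a| := by
  rw [manhattan, Finset.sum_eq_single i (fun x _ hx => by simp [hx]) (by simp)]
  simp

lemma single_mem_sense_iff (hp : p ∈ grid n) (i : Fin d) {a : ℤ} (ha : |a| = 1) :
    Pi.single i a ∈ sense (grid n) 1 p ↔ 1 ≤ p i + a ∧ p i + a ≤ n i := by
  rw [sense, Set.mem_ofPred_eq, manhattan_single, ha]
  refine ⟨fun h => by simpa using h.1 i, fun h => ⟨fun x => ?_, le_rfl⟩⟩
  by_cases hx : x = i
  · subst hx; simpa using h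
  · simpa [hx] using hp x

lemma boundary_iff_of_sense_eq (hp : p ∈ grid n) (hq : q ∈ grid n)
    (h : sense (grid n) 1 p = sense (grid n) 1 q) (i : Fin d) :
    (1 < p i ↔ 1 < q i) ∧ (p i < n i ↔ q i < n i) := by
  have hup := Set.ext_iff.mp h (Pi.single i 1)
  have hdown := Set.ext_iff.mp h (Pi.single i (-1))
  rw [single_mem_sense_iff hp i (by simp), single_mem_sense_iff hq i (by simp)] at hup hdown
  have := hp i
  have := hq i
  constructor <;> constructor <;> intro <;> omega

lemma apply_eq_of_sense_eq (hp : p ∈ grid n) (hq : q ∈ grid n)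
    (h : sense (grid n) 1 p = sense (grid n) 1 q) {i : Fin d} (hi : n i ≤ 3) : p i = q i := by
  have := boundary_iff_of_sense_eq hp hq h i
  have := hp i
  have := hq i
  omega

lemma interior_of_sense_eq (hp : p ∈ grid n) (hq : q ∈ grid n)
    (h : sense (grid n) 1 p = sense (grid n) 1 q) {i : Fin d} (hpq : p i ≠ q i) :
    1 < p i ∧ p i < n i := by
  have := boundary_iff_of_sense_eq hp hq h i
  have := hp i
  have := hq i
  omega

end Sensing

/-- A Hamiltonian cycle of `latticeGraph D`, as a periodic enumeration of `D` (for `M = 2`, an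
edge traversed back and forth). -/
structure IsHamiltonianCycle {d : ℕ} (D : Set (Fin d → ℤ)) (M : ℕ) (e : ℕ → Fin d → ℤ) :
    Prop where
  pos : 0 < M
  periodic : Periodic e M
  mem : ∀ t, e t ∈ D
  surj : ∀ p ∈ D, ∃ t, e t = p
  inj : ∀ a b, e a = e b → a ≡ b [MOD M]
  adj : ∀ t, manhattan (e (t + 1) - e t) = 1

namespace IsHamiltonianCycle

variable {d : ℕ} {D : Set (Fin d → ℤ)} {M : ℕ} {e : ℕ → Fin d → ℤ}

lemma step_eq_of_eq (he : IsHamiltonianCycle D M e) {a b : ℕ} (hab : e a = e b) :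
    e (a + 1) - e a = e (b + 1) - e b := by
  have hsucc : (a + 1) % M = (b + 1) % M := (he.inj a b hab).add_right 1
  rw [← he.periodic.map_mod_nat (a + 1), hsucc, he.periodic.map_mod_nat, hab]

lemma even_iff_of_eq (he : IsHamiltonianCycle D M e) (hM : Even M) {a b : ℕ} (hab : e a = e b) :
    Even a ↔ Even b := by
  have h2 : a % 2 = b % 2 := (he.inj a b hab).of_dvd hM.two_dvd
  simp only [Nat.even_iff, h2]

end IsHamiltonianCycle

theorem Agent.exists_patrols_of_isHamiltonianCycle {d V M : ℕ} {D : Set (Fin d → ℤ)}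
    {e : ℕ → Fin d → ℤ} (he : IsHamiltonianCycle D M e) (hV : 1 ≤ V)
    (hstep : ∀ a b, sense D V (e a) = sense D V (e b) → e (a + 1) - e a = e (b + 1) - e b) :
    ∃ A : Agent d 0, A.Patrols D V := by
  classical
  let A : Agent d 0 := ⟨fun S m =>
    (if h : ∃ t, S = sense D V (e t) then e (h.choose + 1) - e h.choose else 0, m)⟩
  have hact : ∀ t m, (A.act (sense D V (e t)) m).1 = e (t + 1) - e t := fun t m => by
    have hex : ∃ u, sense D V (e t) = sense D V (e u) := ⟨t, rfl⟩
    simp only [A, dif_pos hex]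
    exact hstep _ _ hex.choose_spec.symm
  have htraj : ∀ t₀ m s, (A.traj D V (e t₀) m s).1 = e (t₀ + s) := by
    intro t₀ m s
    induction s with
    | zero => rfl
    | succ s ih =>
      simp only [Agent.traj, ih, hact]
      rw [← add_assoc, add_sub_cancel]
  refine ⟨A, fun p hp m => ?_, fun v₁ hv₁ m v hv => ?_⟩
  · obtain ⟨t, rfl⟩ := he.surj p hp
    rw [hact]
    refine ⟨he.adj t, ?_, ?_⟩
    · rw [add_sub_cancel]
      exact he.mem _
    · rw [he.adj]
      exact_mod_cast hV
  · obtain ⟨t₀, rfl⟩ := he.surj v₁ hv₁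
    obtain ⟨t₁, rfl⟩ := he.surj v hv
    obtain ⟨k, rfl⟩ := Nat.exists_eq_add_one_of_ne_zero he.pos.ne'
    refine ⟨t₁ + k * t₀, ?_⟩
    rw [htraj, show t₀ + (t₁ + k * t₀) = t₁ + t₀ * (k + 1) by ring]
    simpa using he.periodic.nat_mul t₀ t₁

section Construction

variable {d : ℕ}

lemma update_mem_grid {n : Fin d → ℕ} {p : Fin d → ℤ} (hp : p ∈ grid n) (i : Fin d) {N : ℕ}
    {v : ℤ} (hv₁ : 1 ≤ v) (hv₂ : v ≤ N) : update p i v ∈ grid (update n i N) := by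
  intro x
  by_cases hx : x = i
  · subst hx; simp [hv₁, hv₂]
  · simpa [hx] using hp x

lemma isHamiltonianCycle_two (j : Fin d) :
    IsHamiltonianCycle (grid (update 1 j 2)) 2 (fun t => update 1 j ((t % 2 : ℕ) + 1 : ℤ)) where
  pos := two_pos
  periodic t := by simp
  mem t := update_mem_grid (fun _ => ⟨le_rfl, by simp⟩) j (by omega) (by omega)
  surj p hp := by
    obtain ⟨k, hk⟩ := Int.eq_ofNat_of_zero_le (sub_nonneg.2 (hp j).1)
    have hk2 : k < 2 := by
      have := (hp j).2
      rw [update_self, Nat.cast_ofNat] at this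
      omega
    refine ⟨k, funext fun x => ?_⟩
    by_cases hx : x = j
    · subst hx
      rw [update_self, Nat.mod_eq_of_lt hk2]
      omega
    · have := hp x
      rw [update_of_ne hx, Pi.one_apply, Nat.cast_one] at this
      rw [update_of_ne hx, Pi.one_apply]
      omega
  inj a b hab := by
    have := congrFun hab j
    rwa [update_self, update_self, add_left_inj, Nat.cast_inj] at this
  adj t := by
    rw [← update_sub, sub_self]
    change manhattan (Pi.single j _) = 1
    rw [manhattan_single, abs_eq zero_le_one]
    omega

lemma succ_div_mod_of_lt {t N : ℕ} (h : t % N + 1 < N) :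
    (t + 1) / N = t / N ∧ (t + 1) % N = t % N + 1 := by
  have ht : t + 1 = (t % N + 1) + N * (t / N) := by rw [add_right_comm, Nat.mod_add_div]
  rw [ht, Nat.add_mul_div_left _ _ (by omega), Nat.add_mul_mod_self_left, Nat.div_eq_of_lt h,
    Nat.mod_eq_of_lt h, zero_add]
  exact ⟨rfl, rfl⟩

lemma succ_div_mod_of_eq {t N : ℕ} (h : t % N + 1 = N) :
    (t + 1) / N = t / N + 1 ∧ (t + 1) % N = 0 := by
  have ht : t + 1 = N * (t / N + 1) := by
    have := Nat.mod_add_div t N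
    rw [mul_add_one]
    omega
  rw [ht, Nat.mul_div_cancel_left _ (by omega), Nat.mul_mod_right]
  exact ⟨rfl, rfl⟩

/-- The boustrophedon over `c`: while `c` stays at its `k`-th point, coordinate `i` runs
through `1, …, N` for even `k` and back through `N, …, 1` for odd `k`. -/
def sweep (N : ℕ) (i : Fin d) (c : ℕ → Fin d → ℤ) (t : ℕ) : Fin d → ℤ :=
  update (c (t / N)) i (if Even (t / N) then (t % N : ℕ) + 1 else (N : ℤ) - (t % N : ℕ))

section Sweep

variable {N : ℕ} {i : Fin d} {c : ℕ → Fin d → ℤ}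

lemma update_sweep_one (hc : ∀ k, c k i = 1) (t : ℕ) : update (sweep N i c t) i 1 = c (t / N) := by
  rw [sweep, update_idem, ← hc (t / N), update_eq_self]

lemma sweep_succ_sub_of_lt {t : ℕ} (h : t % N + 1 < N) :
    sweep N i c (t + 1) - sweep N i c t = Pi.single i (if Even (t / N) then 1 else -1) := by
  obtain ⟨hdiv, hmod⟩ := succ_div_mod_of_lt h
  rw [sweep, sweep, ← update_sub, hdiv, hmod, sub_self]
  refine congrArg (update (0 : Fin d → ℤ) i) ?_
  split_ifs <;> push_cast <;> ring

lemma sweep_succ_sub_of_eq (hc : ∀ k, c k i = 1) {t : ℕ} (h : t % N + 1 = N) :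
    sweep N i c (t + 1) - sweep N i c t = c (t / N + 1) - c (t / N) := by
  obtain ⟨hdiv, hmod⟩ := succ_div_mod_of_eq h
  rw [sweep, sweep, ← update_sub, hdiv, hmod, update_eq_self_iff, Pi.sub_apply, hc, hc]
  simp only [Nat.even_add_one]
  split_ifs <;> push_cast <;> omega

lemma mod_add_one_lt_of_interior {t : ℕ} (h₁ : 1 < sweep N i c t i) (h₂ : sweep N i c t i < N) :
    t % N + 1 < N := by
  rw [sweep, update_self] at h₁ h₂
  split_ifs at h₁ h₂ <;> omega

end Sweep

section SweepCycle

variable {n : Fin d → ℕ} {M : ℕ} {i : Fin d} {c : ℕ → Fin d → ℤ}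

lemma IsHamiltonianCycle.apply_self_eq_one (hc : IsHamiltonianCycle (grid (update n i 1)) M c) (k : ℕ) :
    c k i = 1 := by
  have := hc.mem k i
  simp only [update_self, Nat.cast_one] at this
  omega

theorem isHamiltonianCycle_sweep (hc : IsHamiltonianCycle (grid (update n i 1)) M c)
    (hM : Even M) (hN : 0 < n i) : IsHamiltonianCycle (grid n) (n i * M) (sweep (n i) i c) where
  pos := Nat.mul_pos hN hc.pos
  periodic t := by
    have hdiv : (t + n i * M) / n i = t / n i + M := Nat.add_mul_div_left _ _ hN
    simp only [sweep, hdiv, Nat.add_mul_mod_self_left, hc.periodic _, Nat.even_add, hM,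
      iff_true]
  mem t := by
    have hr := Nat.mod_lt t hN
    have := update_mem_grid (hc.mem (t / n i)) i (N := n i)
      (v := if Even (t / n i) then (t % n i : ℕ) + 1 else (n i : ℤ) - (t % n i : ℕ))
      (by split_ifs <;> omega) (by split_ifs <;> omega)
    rwa [update_idem, update_eq_self] at this
  surj p hp := by
    obtain ⟨k, hk⟩ := hc.surj (update p i 1) (update_mem_grid hp i le_rfl le_rfl)
    obtain ⟨v, hv⟩ := Int.eq_ofNat_of_zero_le (sub_nonneg.2 (hp i).1)
    have hvN : v < n i := by have := (hp i).2; omega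
    set r := if Even k then v else n i - 1 - v with hr_def
    have hr : r < n i := by rw [hr_def]; split_ifs <;> omega
    refine ⟨n i * k + r, ?_⟩
    have hdiv : (n i * k + r) / n i = k := by
      rw [add_comm, Nat.add_mul_div_left _ _ hN, Nat.div_eq_of_lt hr, zero_add]
    have hmod : (n i * k + r) % n i = r := by
      rw [add_comm, Nat.add_mul_mod_self_left, Nat.mod_eq_of_lt hr]
    rw [sweep, hdiv, hmod, hk, update_idem, update_eq_self_iff, hr_def]
    split_ifs <;> omega
  inj a b hab := by
    have hbase : c (a / n i) = c (b / n i) := by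
      rw [← update_sweep_one hc.apply_self_eq_one a, hab, update_sweep_one hc.apply_self_eq_one]
    have hk : a / n i ≡ b / n i [MOD M] := hc.inj _ _ hbase
    have hr : a % n i = b % n i := by
      have := congrFun hab i
      simp only [sweep, update_self, hc.even_iff_of_eq hM hbase] at this
      split_ifs at this <;> omega
    calc a = a % n i + n i * (a / n i) := (Nat.mod_add_div a (n i)).symm
      _ ≡ b % n i + n i * (b / n i) [MOD n i * M] := by
        rw [hr]; exact (hk.mul_left' _).add_left _
      _ = b := Nat.mod_add_div b (n i)
  adj t := by
    by_cases h : t % n i + 1 < n i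
    · rw [sweep_succ_sub_of_lt h, manhattan_single]
      split_ifs <;> simp
    · rw [sweep_succ_sub_of_eq hc.apply_self_eq_one (by have := Nat.mod_lt t hN; omega), hc.adj]

/-- Two positions with the same sensing data either coincide, or lie strictly inside the swept
coordinate above the same point of `c`, where the sweep moves in the same direction. -/
theorem sweep_step_eq_of_sense_eq (hc : IsHamiltonianCycle (grid (update n i 1)) M c)
    (hM : Even M) (hN : 0 < n i) (hsmall : ∀ x ≠ i, n x ≤ 3) {a b : ℕ}
    (hab : sense (grid n) 1 (sweep (n i) i c a) =
      sense (grid n) 1 (sweep (n i) i c b)) :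
    sweep (n i) i c (a + 1) - sweep (n i) i c a =
      sweep (n i) i c (b + 1) - sweep (n i) i c b := by
  have hs := isHamiltonianCycle_sweep hc hM hN
  have hrest : ∀ x ≠ i, sweep (n i) i c a x = sweep (n i) i c b x :=
    fun x hx => apply_eq_of_sense_eq (hs.mem a) (hs.mem b) hab (hsmall x hx)
  by_cases hi : sweep (n i) i c a i = sweep (n i) i c b i
  · exact hs.step_eq_of_eq (funext fun x => if hx : x = i then hx ▸ hi else hrest x hx)
  obtain ⟨ha₁, ha₂⟩ := interior_of_sense_eq (hs.mem a) (hs.mem b) hab hi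
  obtain ⟨hb₁, hb₂⟩ := interior_of_sense_eq (hs.mem b) (hs.mem a) hab.symm (Ne.symm hi)
  have hbase : c (a / n i) = c (b / n i) := by
    rw [← update_sweep_one hc.apply_self_eq_one a, ← update_sweep_one hc.apply_self_eq_one b]
    funext x
    by_cases hx : x = i
    · simp [hx]
    · simp [hx, hrest x hx]
  rw [sweep_succ_sub_of_lt (mod_add_one_lt_of_interior ha₁ ha₂),
    sweep_succ_sub_of_lt (mod_add_one_lt_of_interior hb₁ hb₂)]
  simp only [hc.even_iff_of_eq hM hbase]

end SweepCycle

lemma IsHamiltonianCycle.step_eq_of_sense_eq {e : ℕ → Fin d → ℤ} (he : IsHamiltonianCycle (grid n) M e)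
    (hsmall : ∀ x, n x ≤ 3) {a b : ℕ} (hab : sense (grid n) 1 (e a) = sense (grid n) 1 (e b)) :
    e (a + 1) - e a = e (b + 1) - e b :=
  he.step_eq_of_eq (funext fun x => apply_eq_of_sense_eq (he.mem a) (he.mem b) hab (hsmall x))

theorem exists_isHamiltonianCycle_grid_piecewise {n : Fin d → ℕ} (hn : ∀ i, 0 < n i) {j : Fin d}
    (hj : n j = 2) {s : Finset (Fin d)} (hjs : j ∈ s) :
    ∃ M e, Even M ∧ IsHamiltonianCycle (grid (s.piecewise n 1)) M e := by
  suffices h : ∀ t : Finset (Fin d),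
      ∃ M e, Even M ∧ IsHamiltonianCycle (grid ((insert j t).piecewise n 1)) M e by
    rw [← Finset.insert_eq_of_mem hjs]
    exact h s
  intro t
  induction t using Finset.induction_on with
  | empty =>
    rw [LawfulSingleton.insert_empty_eq, Finset.piecewise_singleton, hj]
    exact ⟨2, _, even_two, isHamiltonianCycle_two j⟩
  | @insert a t ha ih =>
    obtain ⟨M, c, hM, hc⟩ := ih
    by_cases haj : a = j
    · subst haj
      rw [Finset.insert_eq_of_mem (Finset.mem_insert_self a t)]
      exact ⟨M, c, hM, hc⟩
    have ha' : a ∉ insert j t := by simp [haj, ha]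
    have hslice :
        update ((insert a (insert j t)).piecewise n 1) a 1 = (insert j t).piecewise n 1 := by
      rw [Finset.piecewise_insert, update_idem, update_eq_self_iff,
        Finset.piecewise_eq_of_notMem _ _ _ ha', Pi.one_apply]
    have hna : (insert a (insert j t)).piecewise n 1 a = n a :=
      Finset.piecewise_eq_of_mem _ _ _ (Finset.mem_insert_self a _)
    refine ⟨n a * M, sweep (n a) a c, hM.mul_left _, ?_⟩
    rw [Finset.insert_comm]
    have := isHamiltonianCycle_sweep (hslice ▸ hc) hM (hna ▸ hn a)
    rwa [hna] at this

end Construction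

lemma exists_eq_two_of_even_prod_min {ι : Type*} [Fintype ι] {n : ι → ℕ} (hn : ∀ i, 2 ≤ n i)
    (h : Even (∏ i, min (n i) 3)) : ∃ j, n j = 2 := by
  obtain ⟨j, -, hj⟩ := (Nat.prime_two.prime.dvd_finsetProd_iff _).1 h.two_dvd
  have := hn j
  exact ⟨j, by omega⟩

theorem zero_bit_patrol_exists_V_one_general {d : ℕ} (n : Fin d → ℕ)
    (hn : ∀ i, 2 ≤ n i)
    (h1 : ∀ i j, 3 < n i → 3 < n j → i = j)
    (h2 : Even (∏ i, min (n i) 3)) :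
    ∃ A : Agent d 0, A.Patrols (grid n) 1 := by
  have hpos : ∀ i, 0 < n i := fun i => lt_of_lt_of_le two_pos (hn i)
  obtain ⟨j, hj⟩ := exists_eq_two_of_even_prod_min hn h2
  by_cases hbig : ∃ i₀, 3 < n i₀
  · obtain ⟨i₀, hi₀⟩ := hbig
    have hji : j ≠ i₀ := by rintro rfl; omega
    have hsmall : ∀ x ≠ i₀, n x ≤ 3 := fun x hx => by
      by_contra hx3
      exact hx (h1 x i₀ (by omega) hi₀)
    obtain ⟨M, c, hM, hc⟩ := exists_isHamiltonianCycle_grid_piecewise hpos hj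
      (Finset.mem_erase.2 ⟨hji, Finset.mem_univ j⟩)
    rw [Finset.piecewise_erase_univ] at hc
    exact Agent.exists_patrols_of_isHamiltonianCycle (isHamiltonianCycle_sweep hc hM (hpos i₀))
      le_rfl fun a b => sweep_step_eq_of_sense_eq hc hM (hpos i₀) hsmall
  · push Not at hbig
    obtain ⟨M, e, -, he⟩ := exists_isHamiltonianCycle_grid_piecewise hpos hj (Finset.mem_univ j)
    rw [Finset.piecewise_univ] at he
    exact Agent.exists_patrols_of_isHamiltonianCycle he le_rfl
      fun a b => he.step_eq_of_sense_eq hbig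

/-- If at most one index `i` has `n i > 3` and `∏ i, min (n i) 3` is
even, then some agent algorithm with `0` bits of memory and sensing range `V = 1`
patrols the grid `[n 0] × ⋯ × [n (d-1)]`. -/
theorem zero_bit_patrol_exists_V_one {d : ℕ} (hd : 1 ≤ d) (n : Fin d → ℕ)
    (hn : ∀ i, 2 ≤ n i)
    (h1 : ∀ i j, 3 < n i → 3 < n j → i = j)
    (h2 : Even (∏ i, min (n i) 3)) :
    ∃ A : Agent d 0, A.Patrols (grid n) 1 :=
  zero_bit_patrol_exists_V_one_general n hn h1 h2
end
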